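/- For constants a ≠ 0, b ≠ 0 with q = √(1+a²) and b² ≠ q², the curve α(σ) = ( e^{bσ}((b/q)sinh(qσ) - cosh(qσ))/(b²-q²), e^{bσ}(sinh(qσ) - (b/q)cosh(qσ))/(b²-q²), (a/(bq)) e^{bσ} ) is a spacelike curve in E¹₃ parametrized by spherical arc length σ whose p-shape curvature and p-shape torsion are the constants b and a respectively; in particular α is self-similar: for every σ₀, the map x ↦ e^{bσ₀} R_{σ₀} x (composed with no translation), where R_{σ₀} is the pseudo-rotation by hyperbolic angle qσ₀ in the first two coordinates, maps the trace of α onto itself, sending α(σ) to α(σ + σ₀). -/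

import Mathlib

noncomputable section

/-- Lorentzian inner product on Minkowski 3-space `E¹₃ = ℝ³`. -/
def lin (x y : Fin 3 → ℝ) : ℝ := -(x 0 * y 0) + x 1 * y 1 + x 2 * y 2

/-- Lorentzian norm `‖x‖ = √|⟨x,x⟩_L|`. -/
def nrmL (x : Fin 3 → ℝ) : ℝ := Real.sqrt |lin x x|

/-- Lorentzian cross product (sign convention from the formal determinant with first row (-i,j,k)). -/
def crossL (u v : Fin 3 → ℝ) : Fin 3 → ℝ :=
  ![u 2 * v 1 - u 1 * v 2, u 2 * v 0 - u 0 * v 2, u 0 * v 1 - u 1 * v 0]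

/-- Determinant of three vectors. -/
def det3 (u v w : Fin 3 → ℝ) : ℝ := Matrix.det (Matrix.of ![u, v, w])

/-- Pseudo-rotation by hyperbolic angle θ in the first two coordinates. -/
def pseudoRot (θ : ℝ) (x : Fin 3 → ℝ) : Fin 3 → ℝ :=
  ![x 0 * Real.cosh θ + x 1 * Real.sinh θ,
    x 0 * Real.sinh θ + x 1 * Real.cosh θ,
    x 2]


/-!
The curve is the orbit `σ ↦ e^{bσ} R_{-qσ} α(0)` of the one-parameter group of pseudo-similarities
`S_σ = e^{bσ} R_{-qσ}`, so its `k`-th derivative is the orbit of `Lᵏ α(0)`, where `L` is the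
infinitesimal generator of `S`. Pseudo-rotations preserve `⟨·,·⟩_L`, the determinant and the
Lorentzian cross product, and the powers of `e^{bσ}` cancel in each of the quotients defining the
invariants, so these are constant, equal to their values at `σ = 0`. There
`α'(0) = (0, -1/q, a/q)`, and the remaining computation only uses `q² = 1 + a²`.
-/

open Real

lemma lin_smul_smul (c d : ℝ) (x y : Fin 3 → ℝ) : lin (c • x) (d • y) = c * d * lin x y := by
  simp only [lin, Pi.smul_apply, smul_eq_mul]
  ring

lemma nrmL_smul (c : ℝ) (x : Fin 3 → ℝ) : nrmL (c • x) = |c| * nrmL x := by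
  rw [nrmL, nrmL, lin_smul_smul, abs_mul, abs_mul_self, sqrt_mul (mul_self_nonneg c),
    sqrt_mul_self_eq_abs]

lemma crossL_smul_smul (c d : ℝ) (x y : Fin 3 → ℝ) :
    crossL (c • x) (d • y) = (c * d) • crossL x y := by
  ext i
  fin_cases i <;>
    simp only [crossL, Pi.smul_apply, smul_eq_mul, Fin.zero_eta, Fin.mk_one, Fin.reduceFinMk,
      Matrix.cons_val_zero, Matrix.cons_val_one, Matrix.cons_val] <;>
    ring

lemma det3_smul (c : ℝ) (x y z : Fin 3 → ℝ) :
    det3 (c • x) (c • y) (c • z) = c ^ 3 * det3 x y z := by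
  simp only [det3, Matrix.det_fin_three, Matrix.of_apply, Matrix.cons_val', Pi.smul_apply,
    smul_eq_mul, Matrix.cons_val_fin_one, Matrix.cons_val_zero, Matrix.cons_val_one, Matrix.cons_val]
  ring

lemma pseudoRot_smul (θ c : ℝ) (x : Fin 3 → ℝ) : pseudoRot θ (c • x) = c • pseudoRot θ x := by
  ext i
  fin_cases i <;>
    simp only [pseudoRot, Pi.smul_apply, smul_eq_mul, Fin.zero_eta, Fin.mk_one, Fin.reduceFinMk,
      Matrix.cons_val_zero, Matrix.cons_val_one, Matrix.cons_val] <;>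
    ring

lemma pseudoRot_pseudoRot (s t : ℝ) (x : Fin 3 → ℝ) :
    pseudoRot s (pseudoRot t x) = pseudoRot (s + t) x := by
  ext i
  fin_cases i <;>
    simp only [pseudoRot, cosh_add, sinh_add, Fin.zero_eta, Fin.mk_one, Fin.reduceFinMk,
      Matrix.cons_val_zero, Matrix.cons_val_one, Matrix.cons_val] <;>
    ring

lemma lin_pseudoRot (θ : ℝ) (x y : Fin 3 → ℝ) :
    lin (pseudoRot θ x) (pseudoRot θ y) = lin x y := by
  simp only [lin, pseudoRot, Matrix.cons_val_zero, Matrix.cons_val_one, Matrix.cons_val]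
  linear_combination (x 1 * y 1 - x 0 * y 0) * cosh_sq_sub_sinh_sq θ

lemma det3_pseudoRot (θ : ℝ) (x y z : Fin 3 → ℝ) :
    det3 (pseudoRot θ x) (pseudoRot θ y) (pseudoRot θ z) = det3 x y z := by
  simp only [det3, pseudoRot, Matrix.det_fin_three, Matrix.of_apply, Matrix.cons_val',
    Matrix.cons_val_fin_one, Matrix.cons_val_zero, Matrix.cons_val_one, Matrix.cons_val]
  linear_combination (x 0 * y 1 * z 2 - x 1 * y 0 * z 2 + x 2 * y 0 * z 1 - x 2 * y 1 * z 0
    - x 0 * y 2 * z 1 + x 1 * y 2 * z 0) * cosh_sq_sub_sinh_sq θ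

lemma crossL_pseudoRot (θ : ℝ) (x y : Fin 3 → ℝ) :
    crossL (pseudoRot θ x) (pseudoRot θ y) = pseudoRot θ (crossL x y) := by
  ext i
  fin_cases i
  · simp only [crossL, pseudoRot, Fin.zero_eta, Matrix.cons_val_zero, Matrix.cons_val_one,
      Matrix.cons_val]
    ring
  · simp only [crossL, pseudoRot, Fin.mk_one, Matrix.cons_val_zero, Matrix.cons_val_one,
      Matrix.cons_val]
    ring
  · simp only [crossL, pseudoRot, Fin.reduceFinMk, Matrix.cons_val_zero, Matrix.cons_val_one,
      Matrix.cons_val]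
    linear_combination (x 0 * y 1 - x 1 * y 0) * cosh_sq_sub_sinh_sq θ

def pseudoSim (b q σ : ℝ) (x : Fin 3 → ℝ) : Fin 3 → ℝ := exp (b * σ) • pseudoRot (-(q * σ)) x

def pseudoSimGen (b q : ℝ) (x : Fin 3 → ℝ) : Fin 3 → ℝ :=
  ![b * x 0 - q * x 1, b * x 1 - q * x 0, b * x 2]

lemma pseudoSim_add (b q s t : ℝ) (x : Fin 3 → ℝ) :
    pseudoSim b q (s + t) x = pseudoSim b q s (pseudoSim b q t x) := by
  simp only [pseudoSim, pseudoRot_smul, pseudoRot_pseudoRot, smul_smul, ← exp_add]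
  congr 2 <;> ring

lemma hasDerivAt_pseudoSim (b q σ : ℝ) (x : Fin 3 → ℝ) :
    HasDerivAt (fun s => pseudoSim b q s x) (pseudoSim b q σ (pseudoSimGen b q x)) σ := by
  have he : HasDerivAt (fun s => exp (b * s)) (exp (b * σ) * b) σ := by
    simpa using ((hasDerivAt_id σ).const_mul b).exp
  have hθ : HasDerivAt (fun s => -(q * s)) (-q) σ := by
    simpa using ((hasDerivAt_id σ).const_mul q).neg.congr_of_eventuallyEq (by rfl)
  rw [hasDerivAt_pi]
  intro i
  fin_cases i
  · show HasDerivAt (fun s => exp (b * s) * (x 0 * cosh (-(q * s)) + x 1 * sinh (-(q * s)))) _ σ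
    refine (he.mul ((hθ.cosh.const_mul (x 0)).add (hθ.sinh.const_mul (x 1)))).congr_deriv ?_
    simp only [pseudoSim, pseudoRot, pseudoSimGen, cosh_neg, sinh_neg, Pi.add_apply, Pi.smul_apply,
      smul_eq_mul, Fin.zero_eta, Matrix.cons_val_zero, Matrix.cons_val_one, Matrix.cons_val]
    ring
  · show HasDerivAt (fun s => exp (b * s) * (x 0 * sinh (-(q * s)) + x 1 * cosh (-(q * s)))) _ σ
    refine (he.mul ((hθ.sinh.const_mul (x 0)).add (hθ.cosh.const_mul (x 1)))).congr_deriv ?_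
    simp only [pseudoSim, pseudoRot, pseudoSimGen, cosh_neg, sinh_neg, Pi.add_apply, Pi.smul_apply,
      smul_eq_mul, Fin.mk_one, Matrix.cons_val_zero, Matrix.cons_val_one, Matrix.cons_val]
    ring
  · show HasDerivAt (fun s => exp (b * s) * x 2) _ σ
    refine (he.mul_const (x 2)).congr_deriv ?_
    simp only [pseudoSim, pseudoRot, pseudoSimGen, Pi.smul_apply, smul_eq_mul, Fin.reduceFinMk,
      Matrix.cons_val]
    ring

lemma deriv_pseudoSim (b q : ℝ) (x : Fin 3 → ℝ) :
    deriv (fun s => pseudoSim b q s x) = fun s => pseudoSim b q s (pseudoSimGen b q x) :=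
  funext fun σ => (hasDerivAt_pseudoSim b q σ x).deriv

lemma lin_pseudoSim (b q σ : ℝ) (x y : Fin 3 → ℝ) :
    lin (pseudoSim b q σ x) (pseudoSim b q σ y) = exp (b * σ) ^ 2 * lin x y := by
  rw [pseudoSim, pseudoSim, lin_smul_smul, lin_pseudoRot, sq]

lemma nrmL_pseudoSim (b q σ : ℝ) (x : Fin 3 → ℝ) :
    nrmL (pseudoSim b q σ x) = exp (b * σ) * nrmL x := by
  rw [pseudoSim, nrmL_smul, abs_of_pos (exp_pos _), nrmL, nrmL, lin_pseudoRot]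

lemma nrmL_crossL_pseudoSim (b q σ : ℝ) (x y : Fin 3 → ℝ) :
    nrmL (crossL (pseudoSim b q σ x) (pseudoSim b q σ y)) =
      exp (b * σ) ^ 2 * nrmL (crossL x y) := by
  rw [pseudoSim, pseudoSim, crossL_smul_smul, crossL_pseudoRot, nrmL_smul, nrmL, nrmL,
    lin_pseudoRot, abs_of_pos (by positivity), sq]

lemma det3_pseudoSim (b q σ : ℝ) (x y z : Fin 3 → ℝ) :
    det3 (pseudoSim b q σ x) (pseudoSim b q σ y) (pseudoSim b q σ z) =
      exp (b * σ) ^ 3 * det3 x y z := by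
  rw [pseudoSim, pseudoSim, pseudoSim, det3_smul, det3_pseudoRot]

def pShapeCurve (a b q σ : ℝ) : Fin 3 → ℝ :=
  ![exp (b * σ) * ((b / q) * sinh (q * σ) - cosh (q * σ)) / (b ^ 2 - q ^ 2),
    exp (b * σ) * (sinh (q * σ) - (b / q) * cosh (q * σ)) / (b ^ 2 - q ^ 2),
    (a / (b * q)) * exp (b * σ)]

lemma pShapeCurve_eq_pseudoSim (a b q σ : ℝ) :
    pShapeCurve a b q σ = pseudoSim b q σ (pShapeCurve a b q 0) := by
  ext i
  fin_cases i <;>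
    simp only [pShapeCurve, pseudoSim, pseudoRot, mul_zero, exp_zero, sinh_zero, cosh_zero,
      cosh_neg, sinh_neg, Pi.smul_apply, smul_eq_mul, Fin.zero_eta, Fin.mk_one, Fin.reduceFinMk,
      Matrix.cons_val_zero, Matrix.cons_val_one, Matrix.cons_val] <;>
    ring

def initialTangent (a q : ℝ) : Fin 3 → ℝ := ![0, -1 / q, a / q]

lemma pseudoSimGen_pShapeCurve_zero {a b q : ℝ} (hb : b ≠ 0) (hq : q ≠ 0)
    (hbq : b ^ 2 ≠ q ^ 2) : pseudoSimGen b q (pShapeCurve a b q 0) = initialTangent a q := by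
  have hD : b ^ 2 - q ^ 2 ≠ 0 := sub_ne_zero.2 hbq
  ext i
  fin_cases i <;>
    simp only [pseudoSimGen, pShapeCurve, initialTangent, mul_zero, exp_zero, sinh_zero,
      cosh_zero, Fin.zero_eta, Fin.mk_one, Fin.reduceFinMk, Matrix.cons_val_zero,
      Matrix.cons_val_one, Matrix.cons_val] <;>
    field_simp <;>
    ring

lemma det3_initialTangent {a q : ℝ} (hq : q ≠ 0) (b : ℝ) :
    det3 (initialTangent a q) (pseudoSimGen b q (initialTangent a q))
      (pseudoSimGen b q (pseudoSimGen b q (initialTangent a q))) = -a := by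
  simp only [det3, initialTangent, pseudoSimGen, Matrix.det_fin_three, Matrix.of_apply,
    Matrix.cons_val', Matrix.cons_val_fin_one, Matrix.cons_val_zero, Matrix.cons_val_one,
    Matrix.cons_val]
  field_simp
  ring

section initialTangent

variable {a q : ℝ} (hq : q ≠ 0) (hq2 : q ^ 2 = 1 + a ^ 2)
include hq hq2

lemma lin_initialTangent_self : lin (initialTangent a q) (initialTangent a q) = 1 := by
  simp only [lin, initialTangent, Matrix.cons_val_zero, Matrix.cons_val_one, Matrix.cons_val]
  field_simp
  linarith

lemma nrmL_initialTangent : nrmL (initialTangent a q) = 1 := by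
  rw [nrmL, lin_initialTangent_self hq hq2, abs_one, sqrt_one]

lemma lin_pseudoSimGen_initialTangent (b : ℝ) :
    lin (pseudoSimGen b q (initialTangent a q)) (initialTangent a q) = b := by
  simp only [lin, pseudoSimGen, initialTangent, Matrix.cons_val_zero, Matrix.cons_val_one,
    Matrix.cons_val]
  field_simp
  linear_combination -b * hq2

lemma nrmL_crossL_initialTangent (b : ℝ) :
    nrmL (crossL (initialTangent a q) (pseudoSimGen b q (initialTangent a q))) = 1 := by
  have hlin : lin (crossL (initialTangent a q) (pseudoSimGen b q (initialTangent a q)))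
      (crossL (initialTangent a q) (pseudoSimGen b q (initialTangent a q))) = 1 := by
    simp only [lin, crossL, pseudoSimGen, initialTangent, Matrix.cons_val_zero,
      Matrix.cons_val_one, Matrix.cons_val]
    field_simp
    linear_combination -q ^ 2 * hq2
  rw [nrmL, hlin, abs_one, sqrt_one]

end initialTangent

theorem stmt_18_general (a b q : ℝ) (hb : b ≠ 0)
    (hq : q = Real.sqrt (1 + a ^ 2)) (hbq : b ^ 2 ≠ q ^ 2)
    (α : ℝ → Fin 3 → ℝ)
    (hα : ∀ σ, α σ =
      ![Real.exp (b * σ) * ((b / q) * Real.sinh (q * σ) - Real.cosh (q * σ)) / (b ^ 2 - q ^ 2),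
        Real.exp (b * σ) * (Real.sinh (q * σ) - (b / q) * Real.cosh (q * σ)) / (b ^ 2 - q ^ 2),
        (a / (b * q)) * Real.exp (b * σ)]) :
    (∀ σ, 0 < lin (deriv α σ) (deriv α σ)) ∧
    (∀ σ, lin (deriv (deriv α) σ) (deriv α σ) / lin (deriv α σ) (deriv α σ) = b) ∧
    (∀ σ, det3 (deriv α σ) (deriv (deriv α) σ) (deriv (deriv (deriv α)) σ) *
        nrmL (deriv α σ) ^ 3 / nrmL (crossL (deriv α σ) (deriv (deriv α) σ)) ^ 3 = -a) ∧
    (∀ σ₀ σ, Real.exp (b * σ₀) • pseudoRot (-(q * σ₀)) (α σ) = α (σ + σ₀)) := by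
  have hq0 : q ≠ 0 := by rw [hq]; positivity
  have hq2 : q ^ 2 = 1 + a ^ 2 := by rw [hq, sq_sqrt (by positivity)]
  have hα_orbit : α = fun σ => pseudoSim b q σ (pShapeCurve a b q 0) :=
    funext fun σ => (hα σ).trans (pShapeCurve_eq_pseudoSim a b q σ)
  set t := initialTangent a q
  have h1 : deriv α = fun σ => pseudoSim b q σ t := by
    rw [hα_orbit, deriv_pseudoSim, pseudoSimGen_pShapeCurve_zero hb hq0 hbq]
  have h2 : deriv (deriv α) = fun σ => pseudoSim b q σ (pseudoSimGen b q t) := by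
    rw [h1, deriv_pseudoSim]
  have h3 : deriv (deriv (deriv α)) =
      fun σ => pseudoSim b q σ (pseudoSimGen b q (pseudoSimGen b q t)) := by
    rw [h2, deriv_pseudoSim]
  refine ⟨fun σ => ?_, fun σ => ?_, fun σ => ?_, fun σ₀ σ => ?_⟩
  · rw [h1, lin_pseudoSim, lin_initialTangent_self hq0 hq2]
    positivity
  · rw [h2, h1, lin_pseudoSim, lin_pseudoSim, lin_pseudoSimGen_initialTangent hq0 hq2,
      lin_initialTangent_self hq0 hq2]
    field_simp
  · rw [h3, h2, h1, det3_pseudoSim, nrmL_pseudoSim, nrmL_crossL_pseudoSim,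
      det3_initialTangent hq0, nrmL_initialTangent hq0 hq2, nrmL_crossL_initialTangent hq0 hq2]
    field_simp
  · simp only [hα_orbit, add_comm σ, pseudoSim_add]
    rfl

/-- The explicit curve α with constant p-shape (b, a) is a spacelike self-similar curve: its
tangent is spacelike, its p-shape curvature is the constant b, its torsion-to-curvature
invariant is the constant -a (the value a up to sign conventions), and for every σ₀ the
pseudo-similarity x ↦ e^{bσ₀}·(pseudo-rotation by hyperbolic angle qσ₀) maps the trace of α
onto itself, sending α(σ) to α(σ + σ₀). -/
theorem stmt_18 (a b q : ℝ) (ha : a ≠ 0) (hb : b ≠ 0)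
    (hq : q = Real.sqrt (1 + a ^ 2)) (hbq : b ^ 2 ≠ q ^ 2)
    (α : ℝ → Fin 3 → ℝ)
    (hα : ∀ σ, α σ =
      ![Real.exp (b * σ) * ((b / q) * Real.sinh (q * σ) - Real.cosh (q * σ)) / (b ^ 2 - q ^ 2),
        Real.exp (b * σ) * (Real.sinh (q * σ) - (b / q) * Real.cosh (q * σ)) / (b ^ 2 - q ^ 2),
        (a / (b * q)) * Real.exp (b * σ)]) :
    (∀ σ, 0 < lin (deriv α σ) (deriv α σ)) ∧
    (∀ σ, lin (deriv (deriv α) σ) (deriv α σ) / lin (deriv α σ) (deriv α σ) = b) ∧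
    (∀ σ, det3 (deriv α σ) (deriv (deriv α) σ) (deriv (deriv (deriv α)) σ) *
        nrmL (deriv α σ) ^ 3 / nrmL (crossL (deriv α σ) (deriv (deriv α) σ)) ^ 3 = -a) ∧
    (∀ σ₀ σ, Real.exp (b * σ₀) • pseudoRot (-(q * σ₀)) (α σ) = α (σ + σ₀)) :=
  stmt_18_general a b q hb hq hbq α hα
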